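/- Let ℐ be a finite set with |ℐ| = n ≥ 2, Π the full symmetric group on ℐ, and B : ℐ × ℐ → ℝ fixed. For π uniform on Π and T_π = Σ_{i∈ℐ} B_{π(i),i}, the variance of T_π equals Var(T_π) = (1/(n−1)) Σ_{i,i'} (B_{i',i} − B̄_{·,i} − B̄_{i',·} + B̄)², where B̄_{·,i} = (1/n)Σ_{i'} B_{i',i}, B̄_{i',·} = (1/n)Σ_i B_{i',i}, and B̄ = (1/n²)Σ_{i,i'} B_{i',i}. -/
import Mathlib

open Finset

section PSVHelpers
variable {ι : Type*} [Fintype ι] [DecidableEq ι]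

private lemma psv_fiber_card (i a b : ι) :
    (univ.filter fun π : Equiv.Perm ι => π i = a).card
      = (univ.filter fun π : Equiv.Perm ι => π i = b).card := by
  apply Finset.card_bij' (fun π _ => Equiv.swap a b * π) (fun π _ => Equiv.swap a b * π)
  · intro π hπ
    simp only [mem_filter, mem_univ, true_and] at hπ ⊢
    simp [Equiv.Perm.mul_apply, hπ]
  · intro π hπ
    simp only [mem_filter, mem_univ, true_and] at hπ ⊢
    simp [Equiv.Perm.mul_apply, hπ]
  · intro π _
    simp [← mul_assoc, Equiv.swap_mul_self]
  · intro π _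
    simp [← mul_assoc, Equiv.swap_mul_self]

private lemma psv_sum_single (i : ι) (f : ι → ℝ) :
    (Fintype.card ι : ℝ) * ∑ π : Equiv.Perm ι, f (π i)
      = (Fintype.card (Equiv.Perm ι) : ℝ) * ∑ a : ι, f a := by
  have hfib : ∑ a : ι, ∑ π ∈ univ.filter (fun π : Equiv.Perm ι => π i = a), f (π i)
      = ∑ π : Equiv.Perm ι, f (π i) :=
    Finset.sum_fiberwise_of_maps_to (fun x _ => mem_univ _) _
  have hinner : ∀ a : ι, ∑ π ∈ univ.filter (fun π : Equiv.Perm ι => π i = a), f (π i)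
      = ((univ.filter fun π : Equiv.Perm ι => π i = i).card : ℝ) * f a := by
    intro a
    rw [Finset.sum_congr rfl (fun π hπ => by
      rw [(mem_filter.1 hπ).2]), Finset.sum_const, nsmul_eq_mul, psv_fiber_card i a i]
  have hcard : Fintype.card (Equiv.Perm ι)
      = Fintype.card ι * (univ.filter fun π : Equiv.Perm ι => π i = i).card := by
    have := Finset.card_eq_sum_card_fiberwise
      (f := fun π : Equiv.Perm ι => π i) (s := univ) (t := univ) (fun x _ => mem_univ _)
    rw [← Finset.card_univ, this, Finset.sum_congr rfl (fun a _ => psv_fiber_card i a i),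
      Finset.sum_const, smul_eq_mul, Finset.card_univ]
  rw [← hfib, Finset.mul_sum]
  rw [Finset.sum_congr rfl (fun a _ => by rw [hinner a])]
  rw [Finset.mul_sum]
  refine Finset.sum_congr rfl fun a _ => ?_
  rw [hcard]
  push_cast
  ring

private lemma psv_exists_perm_pair {a b c d : ι} (hab : a ≠ b) (hcd : c ≠ d) :
    ∃ τ : Equiv.Perm ι, τ a = c ∧ τ b = d := by
  refine ⟨Equiv.swap (Equiv.swap a c b) d * Equiv.swap a c, ?_, ?_⟩
  · have hb' : Equiv.swap a c b ≠ c := by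
      intro h
      exact hab ((Equiv.swap a c).injective (h.trans (Equiv.swap_apply_left a c).symm)).symm
    simp only [Equiv.Perm.mul_apply, Equiv.swap_apply_left]
    exact Equiv.swap_apply_of_ne_of_ne (Ne.symm hb') hcd
  · simp only [Equiv.Perm.mul_apply, Equiv.swap_apply_left]

private lemma psv_pair_fiber_card {i j : ι} (a b c d : ι) (hab : a ≠ b) (hcd : c ≠ d) :
    (univ.filter fun π : Equiv.Perm ι => (π i, π j) = (a, b)).card
      = (univ.filter fun π : Equiv.Perm ι => (π i, π j) = (c, d)).card := by
  obtain ⟨τ, hτa, hτb⟩ := psv_exists_perm_pair hab hcd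
  apply Finset.card_bij' (fun π _ => τ * π) (fun π _ => τ⁻¹ * π)
  · intro π hπ
    simp only [mem_filter, mem_univ, true_and, Prod.mk.injEq] at hπ ⊢
    exact ⟨by simp [Equiv.Perm.mul_apply, hπ.1, hτa], by simp [Equiv.Perm.mul_apply, hπ.2, hτb]⟩
  · intro π hπ
    simp only [mem_filter, mem_univ, true_and, Prod.mk.injEq] at hπ ⊢
    constructor
    · simp [Equiv.Perm.mul_apply, hπ.1, ← hτa]
    · simp [Equiv.Perm.mul_apply, hπ.2, ← hτb]
  · intro π _; simp [← mul_assoc]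
  · intro π _; simp [← mul_assoc]

private lemma psv_sum_pair {i j : ι} (hij : i ≠ j) (F : ι → ι → ℝ) :
    ((Fintype.card ι : ℝ) * ((Fintype.card ι : ℝ) - 1)) * ∑ π : Equiv.Perm ι, F (π i) (π j)
      = (Fintype.card (Equiv.Perm ι) : ℝ) * ∑ p ∈ (univ : Finset ι).offDiag, F p.1 p.2 := by
  have hmaps : ∀ π : Equiv.Perm ι, π ∈ (univ : Finset (Equiv.Perm ι)) →
      (π i, π j) ∈ (univ : Finset ι).offDiag := by
    intro π _
    exact Finset.mem_offDiag.2 ⟨mem_univ _, mem_univ _, fun h => hij (π.injective h)⟩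
  have hfib : ∑ p ∈ (univ : Finset ι).offDiag,
        ∑ π ∈ univ.filter (fun π : Equiv.Perm ι => (π i, π j) = p), F (π i) (π j)
      = ∑ π : Equiv.Perm ι, F (π i) (π j) :=
    Finset.sum_fiberwise_of_maps_to hmaps _
  set K : ℕ := (univ.filter fun π : Equiv.Perm ι => (π i, π j) = (i, j)).card with hK
  have hinner : ∀ p ∈ (univ : Finset ι).offDiag,
      ∑ π ∈ univ.filter (fun π : Equiv.Perm ι => (π i, π j) = p), F (π i) (π j)
        = (K : ℝ) * F p.1 p.2 := by
    intro p hp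
    obtain ⟨-, -, hp12⟩ := Finset.mem_offDiag.1 hp
    rw [Finset.sum_congr rfl (fun π hπ => by
      have := (mem_filter.1 hπ).2
      rw [show π i = p.1 from congrArg Prod.fst this, show π j = p.2 from congrArg Prod.snd this]),
      Finset.sum_const, nsmul_eq_mul]
    congr 1
    rw [hK, psv_pair_fiber_card i j p.1 p.2 hij hp12]
  have hcard : Fintype.card (Equiv.Perm ι)
      = (Fintype.card ι * Fintype.card ι - Fintype.card ι) * K := by
    have h1 := Finset.card_eq_sum_card_fiberwise
      (f := fun π : Equiv.Perm ι => (π i, π j)) (s := univ) (t := (univ : Finset ι).offDiag) hmaps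
    rw [← Finset.card_univ, h1,
      Finset.sum_congr rfl (fun p hp => by
        obtain ⟨-, -, hp12⟩ := Finset.mem_offDiag.1 hp
        exact psv_pair_fiber_card p.1 p.2 i j hp12 hij),
      Finset.sum_const, smul_eq_mul, Finset.offDiag_card, Finset.card_univ]
  rw [← hfib, Finset.mul_sum, Finset.mul_sum]
  refine Finset.sum_congr rfl fun p hp => ?_
  rw [hinner p hp, hcard]
  have hle : Fintype.card ι ≤ Fintype.card ι * Fintype.card ι :=
    Nat.le_mul_of_pos_left _ (Fintype.card_pos_iff.2 ⟨i⟩)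
  push_cast [Nat.cast_sub hle]
  ring

end PSVHelpers

/-- Variance of a linear permutation statistic. For `|ℐ| = n ≥ 2`, `π`
uniform on the symmetric group of `ℐ`, and `T_π = Σ_i B_{π(i),i}`,
`Var(T_π) = (1/(n−1)) Σ_{i,i'} (B_{i',i} − B̄_{·,i} − B̄_{i',·} + B̄)²`, where
`B̄_{·,i}` is the column mean, `B̄_{i',·}` the row mean, and `B̄` the grand mean. -/
theorem permutation_statistic_variance
    (ι : Type*) [Fintype ι] [DecidableEq ι] (hn : 2 ≤ Fintype.card ι)
    (B : ι → ι → ℝ)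
    (n : ℝ) (hncard : n = Fintype.card ι)
    (Tbar : ℝ)
    (hT : Tbar = (1 / (Fintype.card (Equiv.Perm ι) : ℝ)) *
      ∑ π : Equiv.Perm ι, ∑ i : ι, B (π i) i) :
    (1 / (Fintype.card (Equiv.Perm ι) : ℝ)) *
        ∑ π : Equiv.Perm ι, ((∑ i : ι, B (π i) i) - Tbar) ^ 2
      = (1 / (n - 1)) *
          ∑ i : ι, ∑ i' : ι,
            (B i' i - (1 / n) * ∑ r : ι, B r i - (1 / n) * ∑ c : ι, B i' c
              + (1 / n ^ 2) * ∑ r : ι, ∑ c : ι, B r c) ^ 2 := by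
  classical
  have hcard : (Fintype.card ι : ℝ) = n := hncard.symm
  have hn2 : (2 : ℝ) ≤ n := by
    rw [hncard]; exact_mod_cast hn
  have hn0 : n ≠ 0 := by linarith
  have hn1 : n - 1 ≠ 0 := by linarith
  have hN0 : (Fintype.card (Equiv.Perm ι) : ℝ) ≠ 0 := by
    exact_mod_cast Fintype.card_ne_zero (α := Equiv.Perm ι)
  set N := (Fintype.card (Equiv.Perm ι) : ℝ) with hNdef
  set S := ∑ r : ι, ∑ c : ι, B r c with hS
  set A : ι → ι → ℝ := fun a b =>
    B a b - (1/n) * ∑ r : ι, B r b - (1/n) * ∑ c : ι, B a c + (1/n^2) * S with hA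
  -- column sums of A vanish
  have hcol : ∀ b : ι, ∑ a : ι, A a b = 0 := by
    intro b
    have e1 : ∑ _a : ι, ((1/n) * ∑ r : ι, B r b) = n * ((1/n) * ∑ r : ι, B r b) := by
      rw [Finset.sum_const, Finset.card_univ, nsmul_eq_mul, hcard]
    have e2 : ∑ a : ι, ((1/n) * ∑ c : ι, B a c) = (1/n) * S := by
      rw [← Finset.mul_sum, hS]
    have e3 : ∑ _a : ι, ((1/n^2) * S) = n * ((1/n^2) * S) := by
      rw [Finset.sum_const, Finset.card_univ, nsmul_eq_mul, hcard]
    simp only [hA]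
    rw [Finset.sum_add_distrib, Finset.sum_sub_distrib, Finset.sum_sub_distrib, e1, e2, e3]
    field_simp
    ring
  -- row sums of A vanish
  have hrow : ∀ a : ι, ∑ b : ι, A a b = 0 := by
    intro a
    have e1 : ∑ b : ι, ((1/n) * ∑ r : ι, B r b) = (1/n) * S := by
      rw [← Finset.mul_sum, hS]
      congr 1
      exact Finset.sum_comm
    have e2 : ∑ _b : ι, ((1/n) * ∑ c : ι, B a c) = n * ((1/n) * ∑ c : ι, B a c) := by
      rw [Finset.sum_const, Finset.card_univ, nsmul_eq_mul, hcard]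
    have e3 : ∑ _b : ι, ((1/n^2) * S) = n * ((1/n^2) * S) := by
      rw [Finset.sum_const, Finset.card_univ, nsmul_eq_mul, hcard]
    simp only [hA]
    rw [Finset.sum_add_distrib, Finset.sum_sub_distrib, Finset.sum_sub_distrib, e1, e2, e3]
    field_simp
    ring
  -- the mean
  have key1 : n * ∑ π : Equiv.Perm ι, ∑ i : ι, B (π i) i = N * S := by
    have h1 : ∀ i : ι, n * ∑ π : Equiv.Perm ι, B (π i) i = N * ∑ a : ι, B a i := by
      intro i; rw [← hcard]; exact psv_sum_single i (fun a => B a i)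
    calc n * ∑ π : Equiv.Perm ι, ∑ i : ι, B (π i) i
        = ∑ i : ι, (n * ∑ π : Equiv.Perm ι, B (π i) i) := by
          rw [Finset.sum_comm, Finset.mul_sum]
      _ = ∑ i : ι, (N * ∑ a : ι, B a i) := Finset.sum_congr rfl fun i _ => h1 i
      _ = N * ∑ i : ι, ∑ a : ι, B a i := by rw [Finset.mul_sum]
      _ = N * S := congrArg _ Finset.sum_comm
  have hTbar : Tbar = (1/n) * S := by
    rw [hT]
    field_simp
    field_simp at key1
    linear_combination key1
  -- centered statistic
  have hU : ∀ π : Equiv.Perm ι, (∑ i : ι, B (π i) i) - Tbar = ∑ i : ι, A (π i) i := by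
    intro π
    have e1 : ∑ i : ι, ((1/n) * ∑ r : ι, B r i) = (1/n) * S := by
      rw [← Finset.mul_sum, hS]
      congr 1
      exact Finset.sum_comm
    have e2 : ∑ i : ι, ((1/n) * ∑ c : ι, B (π i) c) = (1/n) * S := by
      rw [← Finset.mul_sum, Equiv.sum_comp π (fun a => ∑ c : ι, B a c), hS]
    have e3 : ∑ _i : ι, ((1/n^2) * S) = n * ((1/n^2) * S) := by
      rw [Finset.sum_const, Finset.card_univ, nsmul_eq_mul, hcard]
    simp only [hA]
    rw [Finset.sum_add_distrib, Finset.sum_sub_distrib, Finset.sum_sub_distrib, e1, e2, e3,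
      hTbar]
    field_simp
    ring
  -- splitting sums over the square into diagonal and off-diagonal
  have hsplit : ∀ f : ι × ι → ℝ, ∑ p ∈ (univ : Finset ι) ×ˢ univ, f p
      = (∑ a : ι, f (a, a)) + ∑ p ∈ (univ : Finset ι).offDiag, f p := by
    intro f
    rw [← Finset.diag_union_offDiag, Finset.sum_union (Finset.disjoint_diag_offDiag _),
      Finset.sum_diag]
  set Q : ℝ := ∑ i : ι, ∑ a : ι, A a i * A a i with hQ
  -- off-diagonal column products
  have hoffsum : ∀ i j : ι, ∑ p ∈ (univ : Finset ι).offDiag, A p.1 i * A p.2 j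
      = - ∑ a : ι, A a i * A a j := by
    intro i j
    have h0 : ∑ p ∈ (univ : Finset ι) ×ˢ univ, A p.1 i * A p.2 j = 0 := by
      rw [Finset.sum_product]
      simp only [← Finset.mul_sum, hcol j]
      simp
    have := hsplit (fun p => A p.1 i * A p.2 j)
    rw [h0] at this
    linarith [this]
  -- expansion of the variance sum
  have hExpand : ∑ π : Equiv.Perm ι, ((∑ i : ι, B (π i) i) - Tbar) ^ 2
      = ∑ p ∈ (univ : Finset ι) ×ˢ univ,
          ∑ π : Equiv.Perm ι, A (π p.1) p.1 * A (π p.2) p.2 := by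
    calc ∑ π : Equiv.Perm ι, ((∑ i : ι, B (π i) i) - Tbar) ^ 2
        = ∑ π : Equiv.Perm ι, ∑ i : ι, ∑ j : ι, A (π i) i * A (π j) j := by
          refine Finset.sum_congr rfl fun π _ => ?_
          rw [hU π, sq, Finset.sum_mul_sum]
      _ = ∑ i : ι, ∑ j : ι, ∑ π : Equiv.Perm ι, A (π i) i * A (π j) j := by
          rw [Finset.sum_comm]
          exact Finset.sum_congr rfl fun i _ => Finset.sum_comm
      _ = ∑ p ∈ (univ : Finset ι) ×ˢ univ,
            ∑ π : Equiv.Perm ι, A (π p.1) p.1 * A (π p.2) p.2 := by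
          rw [Finset.sum_product]
  set Dg : ℝ := ∑ a : ι, ∑ π : Equiv.Perm ι, A (π a) a * A (π a) a with hDg
  set Off : ℝ := ∑ p ∈ (univ : Finset ι).offDiag,
      ∑ π : Equiv.Perm ι, A (π p.1) p.1 * A (π p.2) p.2 with hOff
  have hsplitE : ∑ p ∈ (univ : Finset ι) ×ˢ univ,
      ∑ π : Equiv.Perm ι, A (π p.1) p.1 * A (π p.2) p.2 = Dg + Off :=
    hsplit _
  -- diagonal contribution
  have f1 : n * Dg = N * Q := by
    have h1 : ∀ a : ι, n * ∑ π : Equiv.Perm ι, A (π a) a * A (π a) a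
        = N * ∑ x : ι, A x a * A x a := by
      intro a; rw [← hcard]; exact psv_sum_single a (fun x => A x a * A x a)
    calc n * Dg = ∑ a : ι, (n * ∑ π : Equiv.Perm ι, A (π a) a * A (π a) a) := by
          rw [hDg, Finset.mul_sum]
      _ = ∑ a : ι, (N * ∑ x : ι, A x a * A x a) := Finset.sum_congr rfl fun a _ => h1 a
      _ = N * Q := by rw [← Finset.mul_sum, hQ]
  -- off-diagonal contribution
  have hWsplit := hsplit (fun p => ∑ a : ι, A a p.1 * A a p.2)
  have hW0 : ∑ p ∈ (univ : Finset ι) ×ˢ univ, ∑ a : ι, A a p.1 * A a p.2 = 0 := by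
    rw [Finset.sum_product]
    refine Finset.sum_eq_zero fun i _ => ?_
    show ∑ j : ι, ∑ a : ι, A a i * A a j = 0
    rw [Finset.sum_comm]
    refine Finset.sum_eq_zero fun a _ => ?_
    rw [← Finset.mul_sum, hrow a, mul_zero]
  have hW : ∑ p ∈ (univ : Finset ι).offDiag, ∑ a : ι, A a p.1 * A a p.2 = -Q := by
    rw [hW0] at hWsplit
    rw [hQ]
    linarith [hWsplit]
  have f2 : (n * (n - 1)) * Off = N * Q := by
    have h1 : ∀ p ∈ (univ : Finset ι).offDiag,
        (n * (n - 1)) * ∑ π : Equiv.Perm ι, A (π p.1) p.1 * A (π p.2) p.2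
          = N * -∑ a : ι, A a p.1 * A a p.2 := by
      intro p hp
      obtain ⟨-, -, hp12⟩ := Finset.mem_offDiag.1 hp
      rw [← hcard, psv_sum_pair hp12 (fun x y => A x p.1 * A y p.2), hoffsum p.1 p.2]
    calc (n * (n - 1)) * Off
        = ∑ p ∈ (univ : Finset ι).offDiag,
            ((n * (n - 1)) * ∑ π : Equiv.Perm ι, A (π p.1) p.1 * A (π p.2) p.2) := by
          rw [hOff, Finset.mul_sum]
      _ = ∑ p ∈ (univ : Finset ι).offDiag, (N * -∑ a : ι, A a p.1 * A a p.2) :=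
          Finset.sum_congr rfl h1
      _ = N * -∑ p ∈ (univ : Finset ι).offDiag, ∑ a : ι, A a p.1 * A a p.2 := by
          rw [← Finset.mul_sum, Finset.sum_neg_distrib]
      _ = N * Q := by rw [hW, neg_neg]
  -- right-hand side equals Q up to the factor
  have hRHS : ∑ i : ι, ∑ i' : ι,
      (B i' i - (1 / n) * ∑ r : ι, B r i - (1 / n) * ∑ c : ι, B i' c
        + (1 / n ^ 2) * S) ^ 2 = Q := by
    rw [hQ]
    refine Finset.sum_congr rfl fun i _ => Finset.sum_congr rfl fun i' _ => ?_
    simp only [hA]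
    ring
  -- final assembly
  rw [hExpand, hsplitE, hRHS]
  have hE2 : n * ((n - 1) * (Dg + Off)) = n * (N * Q) := by
    linear_combination (n - 1) * f1 + f2
  have hE3 : (n - 1) * (Dg + Off) = N * Q := mul_left_cancel₀ hn0 hE2
  field_simp
  linear_combination hE3
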